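/- The equation 4ω³(4ω³ - 3ω)² = 3ω has a unique real negative solution, namely ω = -(1/4)·√(6 + 2√(9 + 8√3)). -/
import Mathlib


theorem stmt2 :
    ∀ ω : ℝ, (ω < 0 ∧ 4 * ω ^ 3 * (4 * ω ^ 3 - 3 * ω) ^ 2 = 3 * ω) ↔
      ω = -(1 / 4) * Real.sqrt (6 + 2 * Real.sqrt (9 + 8 * Real.sqrt 3)) := by
  intro ω
  have hs3 : Real.sqrt 3 ^ 2 = 3 := Real.sq_sqrt (by norm_num)
  have hs3nn : (0:ℝ) ≤ Real.sqrt 3 := Real.sqrt_nonneg 3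
  have hs3big : (9:ℝ)/8 < Real.sqrt 3 := by nlinarith
  have hrnn : (0:ℝ) ≤ 9 + 8 * Real.sqrt 3 := by nlinarith
  have hr : Real.sqrt (9 + 8 * Real.sqrt 3) ^ 2 = 9 + 8 * Real.sqrt 3 := Real.sq_sqrt hrnn
  set s := Real.sqrt 3 with hsdef
  set r := Real.sqrt (9 + 8 * s) with hrdef
  have hrnn' : 0 ≤ r := Real.sqrt_nonneg _
  have hrgt3 : 3 < r := by nlinarith
  have hwnn : (0:ℝ) ≤ 6 + 2 * r := by linarith
  have hw : Real.sqrt (6 + 2 * r) ^ 2 = 6 + 2 * r := Real.sq_sqrt hwnn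
  have hwpos : 0 < Real.sqrt (6 + 2 * r) := Real.sqrt_pos.mpr (by linarith)
  constructor
  · rintro ⟨hneg, heq⟩
    have hω0 : ω ≠ 0 := ne_of_lt hneg
    have h1 : 4 * ω ^ 4 * (4 * ω ^ 2 - 3) ^ 2 = 3 := by
      have h2 : ω * (4 * ω ^ 4 * (4 * ω ^ 2 - 3) ^ 2) = ω * 3 := by linear_combination heq
      exact mul_left_cancel₀ hω0 h2
    have hupos : 0 < 8 * ω ^ 4 - 6 * ω ^ 2 + s := by nlinarith [sq_nonneg (ω ^ 2 - 3/8)]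
    have hu : 8 * ω ^ 4 - 6 * ω ^ 2 = s := by
      have hfac : (8 * ω ^ 4 - 6 * ω ^ 2 - s) * (8 * ω ^ 4 - 6 * ω ^ 2 + s) = 0 := by
        linear_combination h1 - hs3
      rcases mul_eq_zero.mp hfac with h | h
      · linarith
      · linarith
    have hw2pos : 0 < ω ^ 2 := pow_two_pos_of_ne_zero hω0
    have h8 : 8 * ω ^ 2 - 3 = r := by
      have hfac : (8 * ω ^ 2 - 3 - r) * (8 * ω ^ 2 - 3 + r) = 0 := by
        linear_combination 8 * hu - hr
      rcases mul_eq_zero.mp hfac with h | h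
      · linarith
      · linarith
    have hfac2 : (-ω - (1/4) * Real.sqrt (6 + 2 * r)) * (-ω + (1/4) * Real.sqrt (6 + 2 * r)) = 0 := by
      linear_combination (1/8) * h8 - (1/16) * hw
    rcases mul_eq_zero.mp hfac2 with h | h
    · linarith
    · nlinarith
  · intro h
    have hω2 : ω ^ 2 = (6 + 2 * r) / 16 := by
      rw [h]; linear_combination (1/16) * hw
    refine ⟨?_, ?_⟩
    · rw [h]; linarith
    · have key : 4 * ω ^ 4 * (4 * ω ^ 2 - 3) ^ 2 = 3 := by
        linear_combination (64 * ω ^ 6 + (8 * r - 72) * ω ^ 4 + (r ^ 2 - 6 * r + 9) * ω ^ 2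
          + (3 + r) * (r ^ 2 - 6 * r + 9) / 8) * hω2 + ((r ^ 2 - 9 + 8 * s) / 64) * hr + hs3
      linear_combination ω * key
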